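/- arXiv:2205.02063 — 5 statements merged into one kernel-verified Lean document; each statement's English description precedes it below -/
import Mathlib

section
/- The integral identity (1/sqrt(2 pi D)) * ∫_0^T b * exp(-b^2/(2 D t (1 - t/T))) / ((1-t/T)^{1/2} t^{3/2}) dt = exp(-2 b^2/(T D)) holds for all b>0, T>0, D>0. -/
/-!
Put `k = b / √(2DT)` and `q(t) = √(t (T - t))`. The integrand is `√(2D)` times
`exp (-(kT/q)²) · kT/(t q)`, which is the derivative of
`exp (-4k²) E(k(2t - T)/q) - E(kT/q)` with `E x = ∫₀ˣ exp (-s²)`: the identity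
`(kT/q)² = (k(2t - T)/q)² + 4k²` merges the two Gaussian factors of the chain rule.
As `t → 0⁺` the arguments of `E` tend to `-∞` and `+∞`, as `t → T⁻` both tend to `+∞`,
so the integral equals `√π exp (-4k²)`. Since the integrand is nonnegative, the existence
of these one-sided limits already makes it integrable.
-/

open MeasureTheory Set Filter Real
open scoped Topology

noncomputable def gaussPrimitive (x : ℝ) : ℝ := ∫ s in (0 : ℝ)..x, exp (-s ^ 2)

theorem hasDerivAt_gaussPrimitive (x : ℝ) : HasDerivAt gaussPrimitive (exp (-x ^ 2)) x :=
  ((by fun_prop : Continuous fun s : ℝ => exp (-s ^ 2)).integral_hasStrictDerivAt 0 x).hasDerivAt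

theorem gaussPrimitive_neg (x : ℝ) : gaussPrimitive (-x) = -gaussPrimitive x := by
  have h := intervalIntegral.integral_comp_neg (a := 0) (b := x) fun s => exp (-s ^ 2)
  simp only [neg_sq, neg_zero] at h
  rw [gaussPrimitive, gaussPrimitive, intervalIntegral.integral_symm, h]

theorem tendsto_gaussPrimitive_atTop : Tendsto gaussPrimitive atTop (𝓝 (√π / 2)) := by
  have hint : IntegrableOn (fun s : ℝ => exp (-s ^ 2)) (Ioi 0) := by
    simpa using (integrable_exp_neg_mul_sq one_pos).integrableOn
  have hval : ∫ s in Ioi (0 : ℝ), exp (-s ^ 2) = √π / 2 := by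
    simpa using integral_gaussian_Ioi 1
  exact hval ▸ intervalIntegral_tendsto_integral_Ioi 0 hint tendsto_id

theorem tendsto_gaussPrimitive_atBot : Tendsto gaussPrimitive atBot (𝓝 (-(√π / 2))) :=
  (tendsto_gaussPrimitive_atTop.comp tendsto_neg_atBot_atTop).neg.congr fun x => by
    simp [gaussPrimitive_neg]

theorem intervalIntegrable_deriv_of_nonneg_of_tendsto {f f' : ℝ → ℝ} {a b fa fb : ℝ}
    (hab : a ≤ b) (hderiv : ∀ x ∈ Ioo a b, HasDerivAt f (f' x) x)
    (hpos : ∀ x ∈ Ioo a b, 0 ≤ f' x) (ha : Tendsto f (𝓝[>] a) (𝓝 fa))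
    (hb : Tendsto f (𝓝[<] b) (𝓝 fb)) : IntervalIntegrable f' volume a b := by
  have hf : ContinuousOn f (Ioo a b) := fun x hx => (hderiv x hx).continuousAt.continuousWithinAt
  refine (intervalIntegrable_iff_integrableOn_Ioc_of_le hab).2 <|
    intervalIntegral.integrableOn_deriv_of_nonneg (continuousOn_Icc_extendFrom_Ioo hf ha hb)
      (fun x hx => ?_) hpos
  refine (hderiv x hx).congr_of_eventuallyEq ?_
  filter_upwards [Ioo_mem_nhds hx.1 hx.2] with y hy using extendFrom_extends hf y hy

theorem tendsto_inv_sqrt_mul_sub {T x : ℝ} (hx : x * (T - x) = 0) :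
    Tendsto (fun u => (√(u * (T - u)))⁻¹) (𝓝[Ioo 0 T] x) atTop := by
  have h : Tendsto (fun u => u * (T - u)) (𝓝[Ioo 0 T] x) (𝓝[>] 0) := by
    refine tendsto_nhdsWithin_iff.2 ⟨?_, ?_⟩
    · exact hx ▸ ((by fun_prop : Continuous fun u : ℝ => u * (T - u)).tendsto x).mono_left
        nhdsWithin_le_nhds
    · filter_upwards [self_mem_nhdsWithin] with u hu using mul_pos hu.1 (sub_pos.2 hu.2)
  exact (tendsto_sqrt_atTop.comp (tendsto_inv_nhdsGT_zero.comp h)).congr fun u => sqrt_inv _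

section BridgePrimitive

variable {k T : ℝ}

noncomputable def bridgeKernel (k T t : ℝ) : ℝ :=
  exp (-(k * T / √(t * (T - t))) ^ 2) * (k * T / (t * √(t * (T - t))))

noncomputable def bridgePrimitive (k T u : ℝ) : ℝ :=
  exp (-(4 * k ^ 2)) * gaussPrimitive (k * (2 * u - T) / √(u * (T - u)))
    - gaussPrimitive (k * T / √(u * (T - u)))

theorem hasDerivAt_bridgePrimitive {t : ℝ} (ht₀ : 0 < t) (htT : t < T) :
    HasDerivAt (bridgePrimitive k T) (bridgeKernel k T t) t := by
  have hs : 0 < t * (T - t) := mul_pos ht₀ (sub_pos.2 htT)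
  set q := √(t * (T - t)) with hq_def
  have hq : 0 < q := sqrt_pos.2 hs
  have hqq : q ^ 2 = t * (T - t) := sq_sqrt hs.le
  have hr : HasDerivAt (fun u => √(u * (T - u))) ((T - 2 * t) / (2 * q)) t :=
    (((hasDerivAt_id' t).fun_mul ((hasDerivAt_id' t).const_sub T)).sqrt
      hs.ne').congr_deriv (by ring)
  have hA := ((((hasDerivAt_id' t).const_mul 2).sub_const T).const_mul k).fun_div hr hq.ne'
  have hB := (hasDerivAt_const t (k * T)).fun_div hr hq.ne'
  have hexp : exp (-(4 * k ^ 2)) * exp (-(k * (2 * t - T) / q) ^ 2) = exp (-(k * T / q) ^ 2) := by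
    rw [← exp_add]
    congr 1
    field_simp
    rw [hqq]
    ring
  refine ((((hasDerivAt_gaussPrimitive _).comp t hA).const_mul (exp (-(4 * k ^ 2)))).fun_sub
    ((hasDerivAt_gaussPrimitive _).comp t hB)).congr_deriv ?_
  rw [bridgeKernel, ← hq_def, ← mul_assoc, hexp, ← mul_sub]
  congr 1
  field_simp
  linear_combination (4 * t * k - 2 * k * T) * hqq

theorem tendsto_bridgePrimitive_nhdsGT_zero (hk : 0 < k) (hT : 0 < T) :
    Tendsto (bridgePrimitive k T) (𝓝[>] 0) (𝓝 (exp (-(4 * k ^ 2)) * -(√π / 2) - √π / 2)) := by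
  have hr := tendsto_inv_sqrt_mul_sub (T := T) (x := 0) (zero_mul _)
  rw [nhdsWithin_Ioo_eq_nhdsGT hT] at hr
  have hlin : Tendsto (fun u => k * (2 * u - T)) (𝓝[>] 0) (𝓝 (k * (2 * 0 - T))) :=
    ((by fun_prop : Continuous fun u : ℝ => k * (2 * u - T)).tendsto 0).mono_left
      nhdsWithin_le_nhds
  have hA := hlin.neg_mul_atTop (by nlinarith) hr
  have hB := hr.const_mul_atTop (mul_pos hk hT)
  exact ((tendsto_gaussPrimitive_atBot.comp hA).const_mul _).sub
    (tendsto_gaussPrimitive_atTop.comp hB)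

theorem tendsto_bridgePrimitive_nhdsLT (hk : 0 < k) (hT : 0 < T) :
    Tendsto (bridgePrimitive k T) (𝓝[<] T) (𝓝 (exp (-(4 * k ^ 2)) * (√π / 2) - √π / 2)) := by
  have hr := tendsto_inv_sqrt_mul_sub (T := T) (x := T) (by rw [sub_self, mul_zero])
  rw [nhdsWithin_Ioo_eq_nhdsLT hT] at hr
  have hlin : Tendsto (fun u => k * (2 * u - T)) (𝓝[<] T) (𝓝 (k * (2 * T - T))) :=
    ((by fun_prop : Continuous fun u : ℝ => k * (2 * u - T)).tendsto T).mono_left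
      nhdsWithin_le_nhds
  have hA := hlin.pos_mul_atTop (by nlinarith) hr
  have hB := hr.const_mul_atTop (mul_pos hk hT)
  exact ((tendsto_gaussPrimitive_atTop.comp hA).const_mul _).sub
    (tendsto_gaussPrimitive_atTop.comp hB)

theorem integral_bridgeKernel (hk : 0 < k) (hT : 0 < T) :
    ∫ t in (0 : ℝ)..T, bridgeKernel k T t = √π * exp (-(4 * k ^ 2)) := by
  have hderiv : ∀ t ∈ Ioo 0 T, HasDerivAt (bridgePrimitive k T) (bridgeKernel k T t) t :=
    fun t ht => hasDerivAt_bridgePrimitive ht.1 ht.2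
  have hpos : ∀ t ∈ Ioo 0 T, 0 ≤ bridgeKernel k T t := fun t ⟨ht₀, _⟩ => by
    unfold bridgeKernel; positivity
  have h₀ := tendsto_bridgePrimitive_nhdsGT_zero hk hT
  have h₁ := tendsto_bridgePrimitive_nhdsLT hk hT
  rw [intervalIntegral.integral_eq_sub_of_hasDerivAt_of_tendsto hT hderiv
    (intervalIntegrable_deriv_of_nonneg_of_tendsto hT.le hderiv hpos h₀ h₁) h₀ h₁]
  ring

end BridgePrimitive

theorem bridge_integrand_eq {D T b t : ℝ} (hD : 0 < D) (ht₀ : 0 < t) (htT : t < T) :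
    b * exp (-b ^ 2 / (2 * D * t * (1 - t / T))) /
        ((1 - t / T) ^ ((1 : ℝ) / 2) * t ^ ((3 : ℝ) / 2)) =
      √(2 * D) * bridgeKernel (b / √(2 * D * T)) T t := by
  have hT : 0 < T := ht₀.trans htT
  have hTt : 0 < T - t := sub_pos.2 htT
  have h1 : (1 - t / T) ^ ((1 : ℝ) / 2) = √(T - t) / √T := by
    rw [← sqrt_eq_rpow, ← sqrt_div hTt.le, sub_div, div_self hT.ne']
  have h3 : t ^ ((3 : ℝ) / 2) = t * √t := by
    rw [show (3 : ℝ) / 2 = 1 + 1 / 2 by norm_num, rpow_add ht₀, rpow_one, sqrt_eq_rpow]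
  rw [bridgeKernel, h1, h3, sqrt_mul' _ hTt.le, sqrt_mul' _ hT.le]
  field_simp
  rw [sq_sqrt ht₀.le, sq_sqrt hTt.le, sq_sqrt hT.le, sq_sqrt (by positivity), mul_right_comm]
  congr 3
  field_simp

theorem bridge_density_integral (D T b : ℝ) (hD : 0 < D) (hT : 0 < T) (hb : 0 < b) :
    (1 / Real.sqrt (2 * Real.pi * D)) *
      ∫ t in Set.Ioo (0 : ℝ) T,
        b * Real.exp (-b ^ 2 / (2 * D * t * (1 - t / T))) /
          ((1 - t / T) ^ ((1 : ℝ) / 2) * t ^ ((3 : ℝ) / 2))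
      = Real.exp (-(2 * b ^ 2) / (T * D)) := by
  have hk : 0 < b / √(2 * D * T) := div_pos hb (sqrt_pos.2 (by positivity))
  rw [setIntegral_congr_fun measurableSet_Ioo fun t ht => bridge_integrand_eq hD ht.1 ht.2,
    integral_const_mul, ← integral_Ioc_eq_integral_Ioo, ← intervalIntegral.integral_of_le hT.le,
    integral_bridgeKernel hk hT, div_pow, sq_sqrt (by positivity),
    show 2 * π * D = 2 * D * π by ring, sqrt_mul (by positivity)]
  field_simp
  ring_nf
end

section
/- For all b>0, T>0, D>0: (1/sqrt(2 pi D)) * ∫_0^T b * exp(-b^2/(2 D t (1 - t/T))) / (t^{1/2} (1-t/T)^{3/2}) dt = T * exp(-2 b^2/(T D)). -/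
/-!
Substitute `t = (T/2) (1 - v / √(v² + 4))`, a decreasing bijection `ℝ → (0, T)` with
`t (1 - t/T) = T / (v² + 4)`. The exponent becomes `-(b²/(2DT)) v² - 2b²/(TD)`, and the Jacobian
divided by `t^(1/2) (1 - t/T)^(3/2)` becomes `√T (1 - v / √(v² + 4))`. The odd part
`v / √(v² + 4)` integrates to zero against the Gaussian `exp (-(b²/(2DT)) v²)`, whose integral is
`√(2πDT) / b`.
-/

open MeasureTheory Real

theorem abs_lt_sqrt_sq_add (v : ℝ) {c : ℝ} (hc : 0 < c) : |v| < √(v ^ 2 + c) :=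
  abs_lt.2 ⟨neg_sqrt_lt_of_sq_lt (by linarith), lt_sqrt_of_sq_lt (by linarith)⟩

theorem integral_eq_zero_of_odd {G E : Type*} [MeasurableSpace G] [AddGroup G] [MeasurableNeg G]
    [NormedAddCommGroup E] [NormedSpace ℝ E] {μ : Measure G} [μ.IsNegInvariant] {f : G → E}
    (hf : ∀ x, f (-x) = -f x) : ∫ x, f x ∂μ = 0 := by
  have h := integral_neg_eq_self f μ
  simp only [hf, integral_neg] at h
  have h2 : (2 : ℝ) • ∫ x, f x ∂μ = 0 := by
    rw [two_smul]; nth_rw 1 [← h]; exact neg_add_cancel _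
  exact (smul_eq_zero.mp h2).resolve_left two_ne_zero

theorem rpow_half_mul_rpow_three_halves {x y : ℝ} (hx : 0 ≤ x) (hy : 0 ≤ y) :
    x ^ ((1 : ℝ) / 2) * y ^ ((3 : ℝ) / 2) = √(x * y) * y := by
  rw [show (3 : ℝ) / 2 = 1 / 2 + 1 by norm_num, rpow_add' hy (by norm_num), rpow_one,
    ← sqrt_eq_rpow, ← sqrt_eq_rpow, sqrt_mul hx, mul_assoc]

theorem integral_exp_neg_mul_sq_mul_one_sub {a : ℝ} (ha : 0 < a) :
    ∫ v : ℝ, exp (-a * v ^ 2) * (1 - v / √(v ^ 2 + 4)) = √(π / a) := by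
  have hodd : ∫ v : ℝ, exp (-a * v ^ 2) * (v / √(v ^ 2 + 4)) = 0 :=
    integral_eq_zero_of_odd fun v => by simp only [neg_sq, neg_div, mul_neg]
  have hbound : ∀ v : ℝ, ‖v / √(v ^ 2 + 4)‖ ≤ 1 := fun v => by
    rw [norm_div, norm_of_nonneg (sqrt_nonneg _)]
    exact div_le_one_of_le₀ (abs_lt_sqrt_sq_add v four_pos).le (sqrt_nonneg _)
  have hgauss := integrable_exp_neg_mul_sq ha
  have hint : Integrable fun v : ℝ => exp (-a * v ^ 2) * (v / √(v ^ 2 + 4)) :=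
    hgauss.mul_bdd (by fun_prop : Measurable fun v : ℝ => v / √(v ^ 2 + 4)).aestronglyMeasurable
      (ae_of_all _ hbound)
  simp_rw [mul_one_sub]
  rw [integral_sub hgauss hint, hodd, sub_zero, integral_gaussian]

noncomputable def bridgeTime (T v : ℝ) : ℝ := T / 2 * (1 - v / √(v ^ 2 + 4))

section bridgeTime

variable {T : ℝ}

theorem hasDerivAt_bridgeTime (T v : ℝ) :
    HasDerivAt (bridgeTime T) (-(2 * T) / √(v ^ 2 + 4) ^ 3) v := by
  have hpos : 0 < v ^ 2 + 4 := by positivity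
  have hsq : √(v ^ 2 + 4) ^ 2 = v ^ 2 + 4 := sq_sqrt hpos.le
  have hsqrt : HasDerivAt (fun v : ℝ => √(v ^ 2 + 4)) (2 * v / (2 * √(v ^ 2 + 4))) v := by
    simpa using ((hasDerivAt_pow 2 v).add_const 4).sqrt hpos.ne'
  refine (((hasDerivAt_id' v).div hsqrt (sqrt_pos.2 hpos).ne').const_sub 1
    |>.const_mul (T / 2)).congr_deriv ?_
  field_simp
  linear_combination (-T) * hsq

theorem strictAnti_bridgeTime (hT : 0 < T) : StrictAnti (bridgeTime T) :=
  strictAnti_of_deriv_neg fun v => by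
    rw [(hasDerivAt_bridgeTime T v).deriv]
    exact div_neg_of_neg_of_pos (by linarith) (by positivity)

theorem one_sub_bridgeTime_div (hT : T ≠ 0) (v : ℝ) :
    1 - bridgeTime T v / T = (√(v ^ 2 + 4) + v) / (2 * √(v ^ 2 + 4)) := by
  unfold bridgeTime
  field_simp
  ring

theorem bridgeTime_mul_one_sub_div (hT : T ≠ 0) (v : ℝ) :
    bridgeTime T v * (1 - bridgeTime T v / T) = T / (v ^ 2 + 4) := by
  have hsq : √(v ^ 2 + 4) ^ 2 = v ^ 2 + 4 := sq_sqrt (by positivity)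
  rw [one_sub_bridgeTime_div hT]
  unfold bridgeTime
  field_simp
  linear_combination v ^ 2 * hsq

theorem bridgeTime_pos (hT : 0 < T) (v : ℝ) : 0 < bridgeTime T v := by
  have hvw := abs_lt_sqrt_sq_add v four_pos
  have : v / √(v ^ 2 + 4) < 1 := (div_lt_one (by positivity)).2 (abs_lt.1 hvw).2
  unfold bridgeTime
  nlinarith

theorem one_sub_bridgeTime_div_pos (hT : 0 < T) (v : ℝ) : 0 < 1 - bridgeTime T v / T := by
  have hvw := abs_lt_sqrt_sq_add v four_pos
  rw [one_sub_bridgeTime_div hT.ne']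
  exact div_pos (by linarith [(abs_lt.1 hvw).1]) (by positivity)

theorem range_bridgeTime (hT : 0 < T) : Set.range (bridgeTime T) = Set.Ioo 0 T := by
  refine Set.Subset.antisymm ?_ fun t ⟨ht0, htT⟩ => ?_
  · rintro _ ⟨v, rfl⟩
    have := one_sub_bridgeTime_div_pos hT v
    exact ⟨bridgeTime_pos hT v, by rwa [sub_pos, div_lt_one hT] at this⟩
  · -- the preimage solves `t (T - t) = T² / (v² + 4)` and has the sign of `T - 2t`
    have hprod : 0 < t * (T - t) := mul_pos ht0 (by linarith)
    set u := √(t * (T - t))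
    have hu : 0 < u := sqrt_pos.2 hprod
    have hsq : u ^ 2 = t * (T - t) := sq_sqrt hprod.le
    refine ⟨(T - 2 * t) / u, ?_⟩
    have h : ((T - 2 * t) / u) ^ 2 + 4 = (T / u) ^ 2 := by
      field_simp
      linear_combination 4 * hsq
    rw [bridgeTime, h, sqrt_sq (by positivity)]
    field_simp
    ring

noncomputable def bridgeDensity (D T b t : ℝ) : ℝ :=
  b * exp (-b ^ 2 / (2 * D * t * (1 - t / T))) /
    (t ^ ((1 : ℝ) / 2) * (1 - t / T) ^ ((3 : ℝ) / 2))

theorem abs_deriv_mul_bridgeDensity_bridgeTime (D b : ℝ) (hT : 0 < T) (v : ℝ) :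
    |-(2 * T) / √(v ^ 2 + 4) ^ 3| * bridgeDensity D T b (bridgeTime T v) =
      b * √T * exp (-(2 * b ^ 2) / (T * D)) *
        (exp (-(b ^ 2 / (2 * D * T)) * v ^ 2) * (1 - v / √(v ^ 2 + 4))) := by
  have hsq : √(v ^ 2 + 4) ^ 2 = v ^ 2 + 4 := sq_sqrt (by positivity)
  have hvw := abs_lt_sqrt_sq_add v four_pos
  have hprod := bridgeTime_mul_one_sub_div hT.ne' v
  have hexp : exp (-b ^ 2 / (2 * D * bridgeTime T v * (1 - bridgeTime T v / T))) =
      exp (-(b ^ 2 / (2 * D * T)) * v ^ 2) * exp (-(2 * b ^ 2) / (T * D)) := by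
    rw [← exp_add, mul_assoc (2 * D), hprod]
    congr 1
    field_simp
    ring
  have hden : bridgeTime T v ^ ((1 : ℝ) / 2) * (1 - bridgeTime T v / T) ^ ((3 : ℝ) / 2) =
      √T / √(v ^ 2 + 4) * ((√(v ^ 2 + 4) + v) / (2 * √(v ^ 2 + 4))) := by
    rw [rpow_half_mul_rpow_three_halves (bridgeTime_pos hT v).le
      (one_sub_bridgeTime_div_pos hT v).le, hprod, sqrt_div' _ (by positivity),
      one_sub_bridgeTime_div hT.ne']
  have hconj : (√(v ^ 2 + 4) - v) * (√(v ^ 2 + 4) + v) = 4 := by linear_combination hsq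
  have hT' : √T ^ 2 = T := sq_sqrt hT.le
  rw [bridgeDensity, hexp, hden, abs_of_neg (div_neg_of_neg_of_pos (by linarith) (by positivity))]
  have : 0 < √(v ^ 2 + 4) + v := by linarith [(abs_lt.1 hvw).1]
  field_simp
  linear_combination (-b * √T ^ 2) * hconj - 4 * b * hT'

end bridgeTime

theorem bridge_density_integral' (D T b : ℝ) (hD : 0 < D) (hT : 0 < T) (hb : 0 < b) :
    (1 / Real.sqrt (2 * Real.pi * D)) *
      ∫ t in Set.Ioo (0 : ℝ) T,
        b * Real.exp (-b ^ 2 / (2 * D * t * (1 - t / T))) /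
          (t ^ ((1 : ℝ) / 2) * (1 - t / T) ^ ((3 : ℝ) / 2))
      = T * Real.exp (-(2 * b ^ 2) / (T * D)) := by
  have hchange : ∫ t in Set.Ioo 0 T, bridgeDensity D T b t =
      ∫ v, |-(2 * T) / √(v ^ 2 + 4) ^ 3| * bridgeDensity D T b (bridgeTime T v) := by
    rw [← range_bridgeTime hT, ← Set.image_univ,
      integral_image_eq_integral_abs_deriv_smul MeasurableSet.univ
        (fun v _ => (hasDerivAt_bridgeTime T v).hasDerivWithinAt)
        (strictAnti_bridgeTime hT).injective.injOn, setIntegral_univ]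
    rfl
  have hsqrt : √(π / (b ^ 2 / (2 * D * T))) = √(2 * π * D) * √T / b := by
    rw [show π / (b ^ 2 / (2 * D * T)) = 2 * π * D * T / b ^ 2 by field_simp,
      sqrt_div' _ (by positivity), sqrt_mul (by positivity), sqrt_sq hb.le]
  change _ * ∫ t in _, bridgeDensity D T b t = _
  simp_rw [hchange, abs_deriv_mul_bridgeDensity_bridgeTime D b hT, integral_const_mul,
    integral_exp_neg_mul_sq_mul_one_sub (by positivity : 0 < b ^ 2 / (2 * D * T)), hsqrt]
  have : 0 < √(2 * π * D) := sqrt_pos.2 (by positivity)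
  field_simp
  rw [sq_sqrt hT.le]
end

section
/- Define G(a) = ∫_0^T exp(-a^2/(2 D t (1-t/T))) / sqrt(2 pi D t (1-t/T)) dt for a>0, with D,T>0 fixed. Then G(a) = (2/D) ∫_a^∞ exp(-2x^2/(T D)) dx. -/
/-!
The substitution `t = (T/2)(1 + u/√(1+u²))` maps `ℝ` onto `(0, T)`, with
`t(1 - t/T) = T/(4(1+u²))` and `dt = (T/2)(1+u²)^(-3/2) du`; it turns the left-hand side
into `(T/2)/√(πDT/2) · ∫_ℝ e^{-ca²(1+u²)}/(1+u²) du` with `c = 2/(TD)`.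
By Craig's formula the last integral is `2√(πc) ∫_a^∞ e^{-cx²} dx`: write
`e^{-ca²(1+u²)}/(1+u²)` as `∫_a^∞ 2cx e^{-c(1+u²)x²} dx`, swap the two integrals and
evaluate the Gaussian integral in `u`.
-/

open MeasureTheory Real Set Filter Topology

theorem integral_Ioi_mul_exp_neg_mul_sq {b : ℝ} (hb : 0 < b) (a : ℝ) :
    ∫ x in Ioi a, x * exp (-b * x ^ 2) = exp (-b * a ^ 2) / (2 * b) := by
  have hderiv (x : ℝ) : HasDerivAt (fun x ↦ -exp (-b * x ^ 2) / (2 * b))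
      (x * exp (-b * x ^ 2)) x := by
    refine (((hasDerivAt_pow 2 x).const_mul (-b)).exp.neg.div_const (2 * b)).congr_deriv ?_
    field_simp
    ring
  have hlim : Tendsto (fun x : ℝ ↦ -exp (-b * x ^ 2) / (2 * b)) atTop (𝓝 0) := by
    have hsq : Tendsto (fun x : ℝ ↦ b * x ^ 2) atTop atTop :=
      (tendsto_pow_atTop two_ne_zero).const_mul_atTop hb
    simpa [neg_mul] using
      ((tendsto_exp_neg_atTop_nhds_zero.comp hsq).neg.div_const (2 * b))
  rw [integral_Ioi_of_hasDerivAt_of_tendsto' (fun x _ ↦ hderiv x)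
    (integrable_mul_exp_neg_mul_sq hb).integrableOn hlim]
  ring

noncomputable def craigKernel (c u x : ℝ) : ℝ := 2 * c * x * exp (-(c * (1 + u ^ 2)) * x ^ 2)

theorem craigKernel_eq_mul_exp (c u x : ℝ) :
    craigKernel c u x = 2 * c * x * exp (-c * x ^ 2) * exp (-(c * x ^ 2) * u ^ 2) := by
  rw [craigKernel, mul_assoc _ (exp _), ← exp_add]
  ring_nf

theorem continuous_craigKernel (c : ℝ) : Continuous (Function.uncurry (craigKernel c)) := by
  unfold craigKernel Function.uncurry
  fun_prop

section craigKernel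

variable {c : ℝ}

theorem craigKernel_nonneg (hc : 0 ≤ c) (u : ℝ) {x : ℝ} (hx : 0 ≤ x) :
    0 ≤ craigKernel c u x := by
  unfold craigKernel
  positivity

theorem integral_Ioi_craigKernel (hc : 0 < c) (a u : ℝ) :
    ∫ x in Ioi a, craigKernel c u x = exp (-c * a ^ 2 * (1 + u ^ 2)) / (1 + u ^ 2) := by
  have hcu : 0 < c * (1 + u ^ 2) := by positivity
  simp only [craigKernel, mul_assoc (2 * c)]
  rw [integral_const_mul, integral_Ioi_mul_exp_neg_mul_sq hcu]
  field_simp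

theorem integral_craigKernel (hc : 0 < c) {x : ℝ} (hx : 0 < x) :
    ∫ u, craigKernel c u x = 2 * √(π * c) * exp (-c * x ^ 2) := by
  simp only [craigKernel_eq_mul_exp]
  rw [integral_const_mul, integral_gaussian]
  have hsqrt : √(π / (c * x ^ 2)) = √(π * c) / (c * x) := by
    rw [show π / (c * x ^ 2) = π * c / (c * x) ^ 2 by field_simp, sqrt_div' _ (sq_nonneg _),
      sqrt_sq (by positivity)]
  rw [hsqrt]
  field_simp

theorem integrable_craigKernel (hc : 0 < c) {a : ℝ} (ha : 0 ≤ a) :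
    Integrable (Function.uncurry (craigKernel c)) (volume.prod (volume.restrict (Ioi a))) := by
  rw [integrable_prod_iff' (continuous_craigKernel c).aestronglyMeasurable]
  constructor
  · filter_upwards [ae_restrict_mem measurableSet_Ioi] with x hx
    have hcx : 0 < c * x ^ 2 := by have : 0 < x := ha.trans_lt hx; positivity
    simp only [Function.uncurry_apply_pair, craigKernel_eq_mul_exp]
    exact (integrable_exp_neg_mul_sq hcx).const_mul _
  · refine IntegrableOn.congr_fun
      ((integrable_exp_neg_mul_sq hc).const_mul (2 * √(π * c))).integrableOn
      (fun x hx ↦ ?_) measurableSet_Ioi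
    have hx0 : 0 < x := ha.trans_lt hx
    rw [← integral_craigKernel hc hx0]
    congr 1 with u
    exact (norm_of_nonneg (craigKernel_nonneg hc.le u hx0.le)).symm

theorem integral_exp_neg_mul_one_add_sq_div (hc : 0 < c) {a : ℝ} (ha : 0 ≤ a) :
    ∫ u, exp (-c * a ^ 2 * (1 + u ^ 2)) / (1 + u ^ 2)
      = 2 * √(π * c) * ∫ x in Ioi a, exp (-c * x ^ 2) :=
  calc _ = ∫ u, ∫ x in Ioi a, craigKernel c u x := by simp only [integral_Ioi_craigKernel hc]
    _ = ∫ x in Ioi a, ∫ u, craigKernel c u x :=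
      integral_integral_swap (integrable_craigKernel hc ha)
    _ = ∫ x in Ioi a, 2 * √(π * c) * exp (-c * x ^ 2) :=
      setIntegral_congr_fun measurableSet_Ioi fun x hx ↦ integral_craigKernel hc (ha.trans_lt hx)
    _ = _ := integral_const_mul _ _

end craigKernel

theorem hasDerivAt_div_sqrt_one_add_sq (u : ℝ) :
    HasDerivAt (fun u ↦ u / √(1 + u ^ 2)) ((1 + u ^ 2) * √(1 + u ^ 2))⁻¹ u := by
  have h0 : 0 < 1 + u ^ 2 := by positivity
  have hsqrt : HasDerivAt (fun u ↦ √(1 + u ^ 2)) (2 * u / (2 * √(1 + u ^ 2))) u :=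
    (((hasDerivAt_pow 2 u).const_add 1).sqrt h0.ne').congr_deriv (by simp)
  refine ((hasDerivAt_id u).div hsqrt (sqrt_pos.2 h0).ne').congr_deriv ?_
  have hsq := sq_sqrt h0.le
  field_simp
  rw [hsq, id]
  ring

theorem strictMono_div_sqrt_one_add_sq : StrictMono fun u : ℝ ↦ u / √(1 + u ^ 2) :=
  strictMono_of_deriv_pos fun u ↦ by
    rw [(hasDerivAt_div_sqrt_one_add_sq u).deriv]
    positivity

theorem one_sub_div_sqrt_one_add_sq_sq (u : ℝ) :
    1 - (u / √(1 + u ^ 2)) ^ 2 = (1 + u ^ 2)⁻¹ := by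
  have h0 : 0 < 1 + u ^ 2 := by positivity
  rw [div_pow, sq_sqrt h0.le]
  field_simp
  ring

theorem range_div_sqrt_one_add_sq : range (fun u : ℝ ↦ u / √(1 + u ^ 2)) = Ioo (-1) 1 := by
  ext r
  constructor
  · rintro ⟨u, rfl⟩
    have := one_sub_div_sqrt_one_add_sq_sq u
    have : 0 < (1 + u ^ 2)⁻¹ := by positivity
    rw [mem_Ioo, ← abs_lt, ← sq_lt_one_iff_abs_lt_one]
    linarith
  · rintro ⟨hr₁, hr₂⟩
    have h0 : 0 < 1 - r ^ 2 := by nlinarith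
    refine ⟨r / √(1 - r ^ 2), ?_⟩
    have h1 : 1 + (r / √(1 - r ^ 2)) ^ 2 = (1 - r ^ 2)⁻¹ := by
      rw [div_pow, sq_sqrt h0.le]
      field_simp
      ring
    simp only [h1, sqrt_inv, div_inv_eq_mul]
    exact div_mul_cancel₀ _ (sqrt_pos.2 h0).ne'

theorem integral_Ioo_comp_mul_one_sub_div {T : ℝ} (hT : 0 < T) (k : ℝ → ℝ) :
    ∫ t in Ioo 0 T, k (t * (1 - t / T))
      = ∫ u, T / 2 * ((1 + u ^ 2) * √(1 + u ^ 2))⁻¹ * k (T / 4 / (1 + u ^ 2)) := by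
  set w : ℝ → ℝ := fun u ↦ u / √(1 + u ^ 2)
  have himage : (fun u ↦ T / 2 * w u + T / 2) '' univ = Ioo 0 T := by
    rw [image_univ, range_comp' (T / 2 * · + T / 2) w, range_div_sqrt_one_add_sq,
      image_affine_Ioo (half_pos hT)]
    ring_nf
  have hderiv (u : ℝ) : HasDerivWithinAt (fun u ↦ T / 2 * w u + T / 2)
      (T / 2 * ((1 + u ^ 2) * √(1 + u ^ 2))⁻¹) univ u :=
    (((hasDerivAt_div_sqrt_one_add_sq u).const_mul (T / 2)).add_const (T / 2)).hasDerivWithinAt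
  have hinj : InjOn (fun u ↦ T / 2 * w u + T / 2) univ := fun x _ y _ hxy ↦
    strictMono_div_sqrt_one_add_sq.injective <| by simpa [hT.ne'] using hxy
  rw [← himage, integral_image_eq_integral_abs_deriv_smul MeasurableSet.univ
    (fun u _ ↦ hderiv u) hinj, Measure.restrict_univ]
  congr 1 with u
  have hprod : (T / 2 * w u + T / 2) * (1 - (T / 2 * w u + T / 2) / T) = T / 4 / (1 + u ^ 2) := by
    rw [div_eq_mul_inv _ (1 + u ^ 2), ← one_sub_div_sqrt_one_add_sq_sq u]
    change _ = T / 4 * (1 - w u ^ 2)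
    field_simp
    ring
  rw [hprod, smul_eq_mul, abs_of_pos (by positivity)]

theorem bridge_G_formula (D T : ℝ) (hD : 0 < D) (hT : 0 < T) (a : ℝ) (ha : 0 < a) :
    ∫ t in Set.Ioo (0 : ℝ) T,
        Real.exp (-a ^ 2 / (2 * D * t * (1 - t / T))) /
          Real.sqrt (2 * Real.pi * D * t * (1 - t / T))
      = (2 / D) * ∫ x in Set.Ioi a, Real.exp (-(2 * x ^ 2) / (T * D)) := by
  set k : ℝ → ℝ := fun s ↦ exp (-a ^ 2 / (2 * D * s)) / √(2 * π * D * s)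
  have hc : 0 < 2 / (T * D) := by positivity
  have hk (u : ℝ) : T / 2 * ((1 + u ^ 2) * √(1 + u ^ 2))⁻¹ * k (T / 4 / (1 + u ^ 2))
      = T / 2 / √(π * D * T / 2)
        * (exp (-(2 / (T * D)) * a ^ 2 * (1 + u ^ 2)) / (1 + u ^ 2)) := by
    have h0 : 0 < 1 + u ^ 2 := by positivity
    have hexp : -a ^ 2 / (2 * D * (T / 4 / (1 + u ^ 2)))
        = -(2 / (T * D)) * a ^ 2 * (1 + u ^ 2) := by
      field_simp
      ring
    simp only [k]
    rw [hexp, show 2 * π * D * (T / 4 / (1 + u ^ 2)) = π * D * T / 2 / (1 + u ^ 2) by ring,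
      sqrt_div' _ h0.le]
    field_simp
  have hsqrt : √(π * (2 / (T * D))) = √(π * D * T / 2) * (2 / (T * D)) := by
    rw [show π * (2 / (T * D)) = π * D * T / 2 * (2 / (T * D)) ^ 2 by field_simp,
      sqrt_mul (by positivity), sqrt_sq hc.le]
  have hgauss (x : ℝ) : exp (-(2 / (T * D)) * x ^ 2) = exp (-(2 * x ^ 2) / (T * D)) := by
    ring_nf
  calc _ = ∫ t in Ioo 0 T, k (t * (1 - t / T)) := by simp only [k, mul_assoc]
    _ = ∫ u, T / 2 / √(π * D * T / 2)
          * (exp (-(2 / (T * D)) * a ^ 2 * (1 + u ^ 2)) / (1 + u ^ 2)) := by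
      simp only [integral_Ioo_comp_mul_one_sub_div hT k, hk]
    _ = T / 2 / √(π * D * T / 2)
          * (2 * √(π * (2 / (T * D))) * ∫ x in Ioi a, exp (-(2 / (T * D)) * x ^ 2)) := by
      rw [integral_const_mul, integral_exp_neg_mul_one_add_sq_div hc ha.le]
    _ = _ := by
      rw [hsqrt]
      simp only [hgauss]
      field_simp
end

section
/- For σ>0, D>0 and s>0, with r = (D/σ^2)s, the Gaussian-averaged expected hitting time ∫_ℝ (1/r)(e^{sqrt(2r/D)|a|}-1)(e^{-a^2/(2σ^2)}/(sqrt(2π)σ)) da equals (σ^2/D) * ((2 e^s ∫_{-sqrt(2s)}^∞ e^{-x^2/2}/sqrt(2π) dx - 1)/s). -/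
/-!
Write `φ_σ` for the centred normal density of standard deviation `σ` and `c = √(2r/D)`.
Completing the square gives the exponential tilting identity
`e^{c a} φ_σ(a) = e^{c²σ²/2} φ_σ(a - cσ²)`, so on the half-line `a > 0` the integral of
`e^{c a} φ_σ(a)` is `e^{c²σ²/2}` times a Gaussian tail, which after rescaling by `σ` is the standard
normal tail beyond `-cσ`. By symmetry the average over `ℝ` is twice the half-line average, and the
half-line mass of `φ_σ` is `1/2`. With `r = (D/σ²) s` one has `cσ = √(2s)` and `c²σ²/2 = s`.
-/

open MeasureTheory Set Real

theorem setIntegral_comp_sub_right_Ioi {E : Type*} [NormedAddCommGroup E] [NormedSpace ℝ E]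
    (f : ℝ → E) (a m : ℝ) :
    ∫ x in Ioi a, f (x - m) = ∫ y in Ioi (a - m), f y := by
  have h := (measurePreserving_sub_right volume m).setIntegral_preimage_emb
    (measurableEmbedding_subRight m) f (Ioi (a - m))
  rwa [preimage_sub_const_Ioi, sub_add_cancel] at h

noncomputable def gaussianDensity (σ x : ℝ) : ℝ :=
  Real.exp (-x ^ 2 / (2 * σ ^ 2)) / (√(2 * π) * σ)

namespace gaussianDensity

theorem one_apply (x : ℝ) : gaussianDensity 1 x = Real.exp (-x ^ 2 / 2) / √(2 * π) := by
  simp [gaussianDensity]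

theorem abs_apply (σ x : ℝ) : gaussianDensity σ |x| = gaussianDensity σ x := by
  simp [gaussianDensity]

theorem mul_apply {σ : ℝ} (hσ : σ ≠ 0) (x : ℝ) :
    gaussianDensity σ (σ * x) = σ⁻¹ * gaussianDensity 1 x := by
  simp only [gaussianDensity]
  rw [show -(σ * x) ^ 2 / (2 * σ ^ 2) = -x ^ 2 / (2 * 1 ^ 2) by field_simp]
  field_simp

theorem exp_mul_mul (σ c x : ℝ) :
    Real.exp (c * x) * gaussianDensity σ x
      = Real.exp (c ^ 2 * σ ^ 2 / 2) * gaussianDensity σ (x - c * σ ^ 2) := by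
  rcases eq_or_ne σ 0 with rfl | hσ
  · simp [gaussianDensity]
  simp only [gaussianDensity, ← mul_div_assoc, ← Real.exp_add]
  congr 2
  field_simp
  ring

theorem integrable (σ : ℝ) : Integrable (gaussianDensity σ) := by
  rcases eq_or_ne σ 0 with rfl | hσ
  · rw [show gaussianDensity 0 = 0 from funext fun x => by simp [gaussianDensity]]
    exact integrable_zero _ _ _
  refine ((integrable_exp_neg_mul_sq (b := 1 / (2 * σ ^ 2)) (by positivity)).div_const
    (√(2 * π) * σ)).congr (.of_forall fun x => ?_)
  simp only [gaussianDensity]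
  congr 2
  ring

theorem integrable_exp_mul (σ c : ℝ) :
    Integrable fun x => Real.exp (c * x) * gaussianDensity σ x := by
  simp only [exp_mul_mul σ c]
  exact ((integrable σ).comp_sub_right _).const_mul _

theorem setIntegral_Ioi_zero {σ : ℝ} (hσ : 0 < σ) :
    ∫ x in Ioi 0, gaussianDensity σ x = 1 / 2 := by
  have hsqrt : √(π / (1 / (2 * σ ^ 2))) = √(2 * π) * σ := by
    rw [show π / (1 / (2 * σ ^ 2)) = 2 * π * σ ^ 2 by field_simp,
      Real.sqrt_mul (by positivity), Real.sqrt_sq hσ.le]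
  calc ∫ x in Ioi 0, gaussianDensity σ x
      = (∫ x in Ioi 0, Real.exp (-(1 / (2 * σ ^ 2)) * x ^ 2)) / (√(2 * π) * σ) := by
        rw [← integral_div]
        refine setIntegral_congr_fun measurableSet_Ioi fun x _ => ?_
        simp only [gaussianDensity]
        congr 2
        ring
    _ = 1 / 2 := by
        rw [integral_gaussian_Ioi, hsqrt]
        field_simp

theorem setIntegral_Ioi_mul {σ : ℝ} (hσ : 0 < σ) (t : ℝ) :
    ∫ y in Ioi (σ * t), gaussianDensity σ y = ∫ x in Ioi t, gaussianDensity 1 x := by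
  have h := integral_comp_mul_left_Ioi (gaussianDensity σ) t hσ
  simp only [mul_apply hσ.ne', integral_const_mul, smul_eq_mul] at h
  exact (mul_left_cancel₀ (inv_ne_zero hσ.ne') h).symm

theorem setIntegral_exp_mul_Ioi_zero {σ : ℝ} (hσ : 0 < σ) (c : ℝ) :
    ∫ x in Ioi 0, Real.exp (c * x) * gaussianDensity σ x
      = Real.exp (c ^ 2 * σ ^ 2 / 2) * ∫ x in Ioi (-(c * σ)), gaussianDensity 1 x := by
  simp only [exp_mul_mul σ c, integral_const_mul]
  rw [setIntegral_comp_sub_right_Ioi, show 0 - c * σ ^ 2 = σ * -(c * σ) by ring,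
    setIntegral_Ioi_mul hσ]

theorem integral_exp_mul_abs_sub_one_mul {σ : ℝ} (hσ : 0 < σ) (c : ℝ) :
    ∫ x, (Real.exp (c * |x|) - 1) * gaussianDensity σ x
      = 2 * Real.exp (c ^ 2 * σ ^ 2 / 2) * (∫ x in Ioi (-(c * σ)), gaussianDensity 1 x) - 1 := by
  conv_lhs => arg 2; ext x; rw [← abs_apply σ x]
  rw [integral_comp_abs (f := fun x => (Real.exp (c * x) - 1) * gaussianDensity σ x)]
  simp only [sub_mul, one_mul]
  rw [integral_sub (integrable_exp_mul σ c).integrableOn (integrable σ).integrableOn,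
    setIntegral_exp_mul_Ioi_zero hσ, setIntegral_Ioi_zero hσ]
  ring

end gaussianDensity

theorem poisson_reset_gaussian_average_scaled
    (σ D s r : ℝ) (hσ : 0 < σ) (hD : 0 < D) (hs : 0 < s) (hr : r = (D / σ ^ 2) * s) :
    ∫ a : ℝ, (1 / r) * (Real.exp (Real.sqrt (2 * r / D) * |a|) - 1) *
        (Real.exp (-a ^ 2 / (2 * σ ^ 2)) / (Real.sqrt (2 * Real.pi) * σ))
      = (σ ^ 2 / D) *
          ((2 * Real.exp s *
              (∫ x in Set.Ioi (-Real.sqrt (2 * s)),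
                  Real.exp (-x ^ 2 / 2) / Real.sqrt (2 * Real.pi)) - 1) / s) := by
  have hc : √(2 * r / D) = √(2 * s) / σ := by
    rw [hr, show 2 * (D / σ ^ 2 * s) / D = 2 * s / σ ^ 2 by field_simp,
      Real.sqrt_div' _ (sq_nonneg σ), Real.sqrt_sq hσ.le]
  have hcσ : √(2 * s) / σ * σ = √(2 * s) := div_mul_cancel₀ _ hσ.ne'
  have htilt : (√(2 * s) / σ) ^ 2 * σ ^ 2 / 2 = s := by
    rw [← mul_pow, hcσ, Real.sq_sqrt (by positivity)]
    ring
  have hr_inv : 1 / r = σ ^ 2 / D / s := by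
    rw [hr]
    field_simp
  calc _ = 1 / r * ∫ a, (Real.exp (√(2 * r / D) * |a|) - 1) * gaussianDensity σ a := by
        rw [← integral_const_mul]
        simp only [mul_assoc, gaussianDensity]
    _ = _ := by
        rw [hc, gaussianDensity.integral_exp_mul_abs_sub_one_mul hσ, hcσ, htilt, hr_inv]
        simp only [gaussianDensity.one_apply]
        ring
end

section
/- Let D,T,σ>0 with T > 4σ^2/D. The Gaussian average of the expected hitting time of the one-dimensional Brownian bridge reset search process equals T (DT/(DT-4σ^2))^{1/2} - T + Tσ/(sqrt(DT)+2σ); if T ≤ 4σ^2/D the average is infinite. -/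
/-!
Write `b = 2/(DT)` and `K(y) = ∫_y^∞ e^{-b x²} dx`. Against the density, `e^{b a²}` combines with
`e^{-a²/(2σ²)}` into `e^{-c a²}` with `c = 1/(2σ²) - b`, which is integrable exactly when
`T > 4σ²/D`. The term `T (e^{b a²} - 1)` then gives a difference of Gaussian integrals, and the
term carrying `K(|a|)` is integrated by parts using
`(e^{-c y²} K(y))' = -2c y e^{-c y²} K(y) - e^{-y²/(2σ²)}`. When `c ≤ 0`, the integrand is
bounded below by a positive constant for `a ≥ 1`, so the average is infinite.
-/

open MeasureTheory Real Set Filter Topology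

noncomputable def gaussianTail (b y : ℝ) : ℝ := ∫ x in Ioi y, exp (-b * x ^ 2)

section gaussianTail

variable {b : ℝ}

lemma gaussianTail_zero (b : ℝ) : gaussianTail b 0 = √(π / b) / 2 := integral_gaussian_Ioi b

lemma gaussianTail_nonneg (b y : ℝ) : 0 ≤ gaussianTail b y :=
  setIntegral_nonneg measurableSet_Ioi fun _ _ => (exp_pos _).le

lemma norm_gaussianTail_le (hb : 0 < b) (y : ℝ) : ‖gaussianTail b y‖ ≤ √(π / b) := by
  rw [norm_of_nonneg (gaussianTail_nonneg b y), ← integral_gaussian]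
  exact setIntegral_le_integral (integrable_exp_neg_mul_sq hb)
    (Eventually.of_forall fun _ => (exp_pos _).le)

lemma hasDerivAt_gaussianTail (hb : 0 < b) (y : ℝ) :
    HasDerivAt (gaussianTail b) (-exp (-b * y ^ 2)) y := by
  have hint : IntegrableOn (fun x => exp (-b * x ^ 2)) (Ioi 0) :=
    (integrable_exp_neg_mul_sq hb).integrableOn
  have heq : gaussianTail b = fun z => gaussianTail b 0 - ∫ x in (0 : ℝ)..z, exp (-b * x ^ 2) :=
    funext fun z => eq_sub_of_add_eq' <|
      intervalIntegral.integral_interval_add_Ioi hint (integrable_exp_neg_mul_sq hb).integrableOn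
  rw [heq]
  exact ((continuous_exp.comp (continuous_const.mul (continuous_pow 2))).integral_hasStrictDerivAt
    0 y).hasDerivAt.const_sub _

lemma continuous_gaussianTail (hb : 0 < b) : Continuous (gaussianTail b) :=
  continuous_iff_continuousAt.2 fun y => (hasDerivAt_gaussianTail hb y).continuousAt

lemma integrableOn_mul_exp_neg_mul_sq_mul_gaussianTail (hb : 0 < b) {c : ℝ} (hc : 0 < c) :
    IntegrableOn (fun y => y * exp (-c * y ^ 2) * gaussianTail b y) (Ioi 0) := by
  have h := integrableOn_rpow_mul_exp_neg_mul_sq hc (s := 1) (by norm_num)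
  simp_rw [rpow_one] at h
  exact h.mul_bdd (continuous_gaussianTail hb).aestronglyMeasurable
    (Eventually.of_forall (norm_gaussianTail_le hb))

lemma integral_mul_exp_neg_mul_sq_mul_gaussianTail (hb : 0 < b) {c : ℝ} (hc : 0 < c) :
    ∫ y in Ioi 0, y * exp (-c * y ^ 2) * gaussianTail b y
      = (gaussianTail b 0 - gaussianTail (b + c) 0) / (2 * c) := by
  have hderiv : ∀ y ∈ Ici (0 : ℝ), HasDerivAt (fun y => exp (-c * y ^ 2) * gaussianTail b y)
      (-(2 * c) * (y * exp (-c * y ^ 2) * gaussianTail b y) - exp (-(b + c) * y ^ 2)) y := by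
    intro y _
    have h := (((hasDerivAt_pow 2 y).const_mul (-c)).exp).mul (hasDerivAt_gaussianTail hb y)
    refine h.congr_deriv ?_
    rw [show -(b + c) * y ^ 2 = -c * y ^ 2 + -b * y ^ 2 by ring, exp_add]
    push_cast
    ring
  have hint : IntegrableOn (fun y => -(2 * c) * (y * exp (-c * y ^ 2) * gaussianTail b y)
      - exp (-(b + c) * y ^ 2)) (Ioi 0) :=
    ((integrableOn_mul_exp_neg_mul_sq_mul_gaussianTail hb hc).const_mul _).sub
      (integrable_exp_neg_mul_sq (by positivity)).integrableOn
  have hlim : Tendsto (fun y => exp (-c * y ^ 2) * gaussianTail b y) atTop (𝓝 0) := by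
    refine Tendsto.zero_mul_isBoundedUnder_le ?_
      (isBoundedUnder_of ⟨_, norm_gaussianTail_le hb⟩)
    exact tendsto_exp_atBot.comp
      ((tendsto_pow_atTop two_ne_zero).const_mul_atTop_of_neg (neg_neg_of_pos hc))
  have hFTC := integral_Ioi_of_hasDerivAt_of_tendsto' hderiv hint hlim
  rw [integral_sub ((integrableOn_mul_exp_neg_mul_sq_mul_gaussianTail hb hc).const_mul _)
    (integrable_exp_neg_mul_sq (by positivity)).integrableOn, integral_const_mul] at hFTC
  change _ - gaussianTail (b + c) 0 = _ at hFTC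
  simp only [zero_pow two_ne_zero, mul_zero, exp_zero, one_mul, zero_sub] at hFTC
  rw [eq_div_iff (by positivity)]
  linarith

lemma integral_abs_mul_exp_neg_mul_sq_mul_gaussianTail (hb : 0 < b) {c : ℝ} (hc : 0 < c) :
    ∫ a, |a| * exp (-c * a ^ 2) * gaussianTail b |a| = (√(π / b) - √(π / (b + c))) / (2 * c) := by
  have h := integral_comp_abs (f := fun y => y * exp (-c * y ^ 2) * gaussianTail b y)
  simp only [sq_abs] at h
  rw [h, integral_mul_exp_neg_mul_sq_mul_gaussianTail hb hc, gaussianTail_zero, gaussianTail_zero]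
  ring

lemma integrable_abs_mul_exp_neg_mul_sq_mul_gaussianTail (hb : 0 < b) {c : ℝ} (hc : 0 < c) :
    Integrable fun a => |a| * exp (-c * a ^ 2) * gaussianTail b |a| := by
  have h := (integrable_rpow_mul_exp_neg_mul_sq hc (s := 1) (by norm_num)).abs
  simp only [rpow_one, abs_mul, abs_exp] at h
  exact h.mul_bdd ((continuous_gaussianTail hb).comp continuous_abs).aestronglyMeasurable
    (Eventually.of_forall fun a => norm_gaussianTail_le hb |a|)

end gaussianTail

noncomputable def bbResetHittingTime (D T a : ℝ) : ℝ :=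
  T * (exp (2 * a ^ 2 / (D * T)) - 1)
    + (2 * |a| * exp (2 * a ^ 2 / (D * T)) / D) * ∫ x in Ioi |a|, exp (-(2 * x ^ 2) / (T * D))

lemma bbResetHittingTime_eq (D T a : ℝ) :
    bbResetHittingTime D T a = T * (exp (2 / (D * T) * a ^ 2) - 1)
      + 2 * |a| * exp (2 / (D * T) * a ^ 2) / D * gaussianTail (2 / (D * T)) |a| := by
  have htail : ∫ x in Ioi |a|, exp (-(2 * x ^ 2) / (T * D)) = gaussianTail (2 / (D * T)) |a| :=
    setIntegral_congr_fun measurableSet_Ioi fun x _ => congrArg exp (by ring)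
  rw [bbResetHittingTime, htail, show 2 * a ^ 2 / (D * T) = 2 / (D * T) * a ^ 2 by ring]

lemma integral_hittingTime_mul_exp_neg_mul_sq {b s : ℝ} (hb : 0 < b) (hbs : b < s) (T D : ℝ) :
    ∫ a, (T * (exp (b * a ^ 2) - 1) + 2 * |a| * exp (b * a ^ 2) / D * gaussianTail b |a|)
        * exp (-s * a ^ 2)
      = T * (√(π / (s - b)) - √(π / s)) + (√(π / b) - √(π / s)) / (D * (s - b)) := by
  have hc : 0 < s - b := sub_pos.2 hbs
  have hsplit : ∀ a : ℝ,
      (T * (exp (b * a ^ 2) - 1) + 2 * |a| * exp (b * a ^ 2) / D * gaussianTail b |a|)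
        * exp (-s * a ^ 2)
      = (T * exp (-(s - b) * a ^ 2) - T * exp (-s * a ^ 2))
        + 2 / D * (|a| * exp (-(s - b) * a ^ 2) * gaussianTail b |a|) := by
    intro a
    have hexp : exp (b * a ^ 2) * exp (-s * a ^ 2) = exp (-(s - b) * a ^ 2) := by
      rw [← exp_add]; ring_nf
    linear_combination (T + 2 * |a| / D * gaussianTail b |a|) * hexp
  have hint₁ : Integrable fun a : ℝ => T * exp (-(s - b) * a ^ 2) :=
    (integrable_exp_neg_mul_sq hc).const_mul _
  have hint₂ : Integrable fun a : ℝ => T * exp (-s * a ^ 2) :=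
    (integrable_exp_neg_mul_sq (hb.trans hbs)).const_mul _
  have hint₃ : Integrable fun a => 2 / D * (|a| * exp (-(s - b) * a ^ 2) * gaussianTail b |a|) :=
    (integrable_abs_mul_exp_neg_mul_sq_mul_gaussianTail hb hc).const_mul _
  simp_rw [hsplit]
  rw [integral_add _ hint₃, integral_sub hint₁ hint₂, integral_const_mul,
    integral_const_mul, integral_const_mul, integral_gaussian, integral_gaussian,
    integral_abs_mul_exp_neg_mul_sq_mul_gaussianTail hb hc, add_sub_cancel]
  · field_simp
  · exact hint₁.sub hint₂

lemma le_hittingTime_mul_exp_neg_mul_sq_div {b s T D S a : ℝ} (hs : 0 < s) (hsb : s ≤ b)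
    (hT : 0 ≤ T) (hD : 0 ≤ D) (hS : 0 < S) (ha : 1 ≤ a) :
    T * (1 - exp (-s)) / S
      ≤ (T * (exp (b * a ^ 2) - 1) + 2 * |a| * exp (b * a ^ 2) / D * gaussianTail b |a|)
        * (exp (-s * a ^ 2) / S) := by
  have hexp : 1 ≤ exp (b * a ^ 2) * exp (-s * a ^ 2) := by
    rw [← exp_add, one_le_exp_iff]; nlinarith
  have htail : exp (-s * a ^ 2) ≤ exp (-s) := exp_le_exp.2 (by nlinarith [one_le_pow₀ (n := 2) ha])
  have hrest : 0 ≤ 2 * |a| * exp (b * a ^ 2) / D * gaussianTail b |a| * exp (-s * a ^ 2) := by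
    have := gaussianTail_nonneg b |a|; positivity
  rw [← mul_div_assoc]
  exact div_le_div_of_nonneg_right (by nlinarith) hS.le

lemma lintegral_ofReal_eq_top_of_forall_Ici_le {f : ℝ → ℝ} {ε r : ℝ} (hε : 0 < ε)
    (h : ∀ a ∈ Ici r, ε ≤ f a) : ∫⁻ a, ENNReal.ofReal (f a) = ⊤ := by
  refine top_le_iff.1 (le_of_eq_of_le ?_ (lintegral_mono fun a =>
    (Ici r).indicator_le (fun a ha => ENNReal.ofReal_le_ofReal (h a ha)) a))
  rw [lintegral_indicator measurableSet_Ici, setLIntegral_const, Real.volume_Ici,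
    ENNReal.mul_top (ENNReal.ofReal_pos.2 hε).ne']

lemma hittingTime_average_closedForm {D T σ : ℝ} (hD : 0 < D) (hσ : 0 < σ)
    (h : 4 * σ ^ 2 < D * T) :
    (T * (√(π / (1 / (2 * σ ^ 2) - 2 / (D * T))) - √(π / (1 / (2 * σ ^ 2))))
        + (√(π / (2 / (D * T))) - √(π / (1 / (2 * σ ^ 2))))
          / (D * (1 / (2 * σ ^ 2) - 2 / (D * T)))) / (√(2 * π) * σ)
      = T * (D * T / (D * T - 4 * σ ^ 2)) ^ ((1 : ℝ) / 2) - T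
        + T * σ / (√(D * T) + 2 * σ) := by
  have hDT : 0 < D * T := by linarith [pow_pos hσ 2]
  have hT : 0 < T := pos_of_mul_pos_right hDT hD.le
  set u := √(D * T)
  have hu2 : u ^ 2 = D * T := sq_sqrt hDT.le
  have hu0 : 0 < u := sqrt_pos.2 hDT
  have hu2σ : 2 * σ < u := by nlinarith
  have hs : √(π / (1 / (2 * σ ^ 2))) = √(2 * π) * σ := by
    rw [show π / (1 / (2 * σ ^ 2)) = 2 * π * σ ^ 2 by field_simp, sqrt_mul (by positivity),
      sqrt_sq hσ.le]
  have hsb : √(π / (1 / (2 * σ ^ 2) - 2 / (D * T)))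
      = √(2 * π) * σ * √(D * T / (D * T - 4 * σ ^ 2)) := by
    rw [show π / (1 / (2 * σ ^ 2) - 2 / (D * T))
        = 2 * π * σ ^ 2 * (D * T / (D * T - 4 * σ ^ 2)) by field_simp; ring,
      sqrt_mul (by positivity), sqrt_mul (by positivity), sqrt_sq hσ.le]
  have hb : √(π / (2 / (D * T))) = √(2 * π) * u / 2 := by
    rw [show π / (2 / (D * T)) = 2 * π * u ^ 2 / 2 ^ 2 by rw [hu2]; field_simp,
      sqrt_div' _ (by positivity), sqrt_mul (by positivity), sqrt_sq hu0.le, sqrt_sq (by norm_num)]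
  have hsub : 1 / (2 * σ ^ 2) - 2 / (D * T) = (u - 2 * σ) * (u + 2 * σ) / (2 * σ ^ 2 * u ^ 2) := by
    rw [hu2]; field_simp; rw [← hu2]; ring
  rw [hs, hsb, hb, hsub, ← sqrt_eq_rpow]
  have hne : u - 2 * σ ≠ 0 := by linarith
  field_simp
  rw [hu2]
  ring

/-- The Gaussian average of the expected hitting time of the one-dimensional Brownian
bridge reset search process (whose expected hitting time of `a ≠ 0` is
`T(e^{2a²/(DT)}-1) + (2|a| e^{2a²/(DT)}/D)∫_{|a|}^∞ e^{-2x²/(TD)} dx`) equals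
`T (DT/(DT-4σ²))^{1/2} - T + Tσ/(√(DT)+2σ)` when `T > 4σ²/D`, and is infinite
when `T ≤ 4σ²/D`. -/
theorem bb_reset_gaussian_average (D T σ : ℝ) (hD : 0 < D) (hT : 0 < T) (hσ : 0 < σ) :
    (4 * σ ^ 2 / D < T →
      ∫ a : ℝ,
          (T * (Real.exp (2 * a ^ 2 / (D * T)) - 1)
            + (2 * |a| * Real.exp (2 * a ^ 2 / (D * T)) / D) *
                ∫ x in Set.Ioi |a|, Real.exp (-(2 * x ^ 2) / (T * D))) *
            (Real.exp (-a ^ 2 / (2 * σ ^ 2)) / (Real.sqrt (2 * Real.pi) * σ))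
        = T * (D * T / (D * T - 4 * σ ^ 2)) ^ ((1 : ℝ) / 2) - T
            + T * σ / (Real.sqrt (D * T) + 2 * σ)) ∧
    (T ≤ 4 * σ ^ 2 / D →
      ∫⁻ a : ℝ,
          ENNReal.ofReal
            ((T * (Real.exp (2 * a ^ 2 / (D * T)) - 1)
              + (2 * |a| * Real.exp (2 * a ^ 2 / (D * T)) / D) *
                  ∫ x in Set.Ioi |a|, Real.exp (-(2 * x ^ 2) / (T * D))) *
              (Real.exp (-a ^ 2 / (2 * σ ^ 2)) / (Real.sqrt (2 * Real.pi) * σ)))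
        = ⊤) := by
  have hb : 0 < 2 / (D * T) := by positivity
  have hdensity : ∀ a : ℝ, -a ^ 2 / (2 * σ ^ 2) = -(1 / (2 * σ ^ 2)) * a ^ 2 := fun a => by ring
  change (_ → ∫ a, bbResetHittingTime D T a * _ = _)
    ∧ (_ → ∫⁻ a, ENNReal.ofReal (bbResetHittingTime D T a * _) = ⊤)
  simp_rw [bbResetHittingTime_eq, hdensity]
  refine ⟨fun h => ?_, fun h => ?_⟩
  · have hlt : 4 * σ ^ 2 < D * T := by rwa [div_lt_iff₀' hD] at h
    have hbs : 2 / (D * T) < 1 / (2 * σ ^ 2) := by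
      rw [div_lt_div_iff₀ (by positivity) (by positivity)]; linarith
    simp_rw [← mul_div_assoc]
    rw [integral_div, integral_hittingTime_mul_exp_neg_mul_sq hb hbs,
      hittingTime_average_closedForm hD hσ hlt]
  · have hsb : 1 / (2 * σ ^ 2) ≤ 2 / (D * T) := by
      rw [div_le_div_iff₀ (by positivity) (by positivity)]
      rw [le_div_iff₀' hD] at h; linarith
    have hε : 0 < T * (1 - exp (-(1 / (2 * σ ^ 2)))) / (√(2 * π) * σ) := by
      have : 0 < 1 - exp (-(1 / (2 * σ ^ 2))) :=
        sub_pos.2 (exp_lt_one_iff.2 (neg_lt_zero.2 (by positivity)))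
      positivity
    exact lintegral_ofReal_eq_top_of_forall_Ici_le hε fun a ha =>
      le_hittingTime_mul_exp_neg_mul_sq_div (by positivity) hsb hT.le hD.le (by positivity) ha
end
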